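/- Let R be a commutative ring, d₁, d₂ : ℚ̂₊ → R arbitrary functions, and a, b, c ∈ R. Then there exists a unique function F : ℚ̂₊ → R with F(0/1) = a, F(1/0) = b, F(1/1) = c satisfying the Farey recursion F(γ ⊕² α) = -d₁(α)F(γ) + d₂(α)F(γ ⊕ α) for all Farey pairs α, γ in ℚ̂₊ with γ ⊕² α ∈ ℚ̂₊. -/

import Mathlib

/-- Two fractions `a/b`, `c/d` form a Farey pair when `a*d - b*c = ±1`. -/
def FareyPair (a b : ℤ × ℤ) : Prop :=
  a.1 * b.2 - a.2 * b.1 = 1 ∨ a.1 * b.2 - a.2 * b.1 = -1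

/-- A nonnegative extended rational: a fraction `p/q` in lowest terms with
`p ≥ 0`, `q ≥ 0`, the fraction with denominator `0` being `1/0 = ∞`. -/
def IsNNExtRat (v : ℤ × ℤ) : Prop :=
  0 ≤ v.1 ∧ 0 ≤ v.2 ∧ Int.gcd v.1 v.2 = 1 ∧ (v.2 = 0 → v.1 = 1)

/-- The set `ℚ̂₊ = (ℚ ∩ [0,∞)) ∪ {1/0}`. -/
def NNExtRat : Type := {v : ℤ × ℤ // IsNNExtRat v}


/-!
Write `det u v = u₁v₂ - u₂v₁`. If `v = γ ⊕² α` for a Farey pair with `det α γ = ε`, then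
`α` and `γ ⊕ α` lie in the box `[0, v]` and have `det` with `v` equal to `ε` and `-ε`. As `v`
is primitive, the box contains at most one point of each nonzero `det` with `v`, so the
decomposition is unique. Conversely, a Bezout point `u ∈ [0, v]` with `det u v = 1` and its
complement `v - u` are comparable unless `v = 1/1`, and the smaller one is `α`. So every
`v ∈ ℚ̂₊` other than `0/1, 1/0, 1/1` is `γ ⊕² α` in exactly one way, with `γ` and `γ ⊕ α`
of smaller height `p + q`, and the recursion determines `F` by induction on the height.
-/

open Set

def det (u v : ℤ × ℤ) : ℤ := u.1 * v.2 - u.2 * v.1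

section det

variable (u v w : ℤ × ℤ)

lemma det_self : det u u = 0 := by
  simp only [det]; ring

lemma det_swap : det v u = -det u v := by
  simp only [det]; ring

lemma det_add_right : det u (v + w) = det u v + det u w := by
  simp only [det, Prod.fst_add, Prod.snd_add]; ring

lemma det_sub_left : det (u - v) w = det u w - det v w := by
  simp only [det, Prod.fst_sub, Prod.snd_sub]; ring

lemma det_sub_right : det u (v - w) = det u v - det u w := by
  simp only [det, Prod.fst_sub, Prod.snd_sub]; ring

variable {u v w}

lemma exists_eq_smul_of_det_eq_zero (hv : IsCoprime v.1 v.2) (h : det w v = 0) :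
    ∃ k : ℤ, w = k • v := by
  obtain ⟨a, b, hab⟩ := hv
  refine ⟨a * w.1 + b * w.2, Prod.ext ?_ ?_⟩ <;> simp only [det] at h <;>
    simp only [Prod.smul_fst, Prod.smul_snd, smul_eq_mul]
  · linear_combination (-w.1) * hab + b * h
  · linear_combination (-w.2) * hab - a * h

lemma eq_of_det_eq (hv : IsCoprime v.1 v.2) (hu : u ∈ Icc 0 v) (hw : w ∈ Icc 0 v)
    (h : det u v = det w v) (h0 : det u v ≠ 0) : u = w := by
  obtain ⟨k, hk⟩ := exists_eq_smul_of_det_eq_zero hv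
    (show det (u - w) v = 0 by rw [det_sub_left, h, sub_self])
  simp only [mem_Icc, Prod.le_def, Prod.fst_zero, Prod.snd_zero] at hu hw
  simp only [Prod.ext_iff, Prod.fst_sub, Prod.snd_sub, Prod.smul_fst, Prod.smul_snd,
    smul_eq_mul] at hk
  -- a nonzero multiple `u - w = k • v` inside `[-v, v]` forces `u = v` or `w = v`
  rcases lt_trichotomy k 0 with hk0 | rfl | hk0
  · have : w = v := Prod.ext (by nlinarith) (by nlinarith)
    exact absurd (h.trans (this ▸ det_self v)) h0
  · exact Prod.ext (by linarith) (by linarith)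
  · have : u = v := Prod.ext (by nlinarith) (by nlinarith)
    exact absurd (this ▸ det_self v) h0

end det

lemma fareyPair_iff {u v : ℤ × ℤ} : FareyPair u v ↔ det u v = 1 ∨ det u v = -1 := Iff.rfl

namespace FareyPair

variable {u v : ℤ × ℤ}

lemma symm (h : FareyPair u v) : FareyPair v u := by
  rw [fareyPair_iff, det_swap u v]
  rw [fareyPair_iff] at h
  omega

lemma add_right (h : FareyPair u v) : FareyPair u (v + u) := by
  rwa [fareyPair_iff, det_add_right, det_self, add_zero]

lemma isCoprime_left (h : FareyPair u v) : IsCoprime u.1 u.2 :=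
  h.elim (fun h => ⟨v.2, -v.1, by linear_combination h⟩)
    (fun h => ⟨-v.2, v.1, by linear_combination -h⟩)

lemma isCoprime_right (h : FareyPair u v) : IsCoprime v.1 v.2 :=
  h.symm.isCoprime_left

end FareyPair

lemma isNNExtRat_iff {v : ℤ × ℤ} : IsNNExtRat v ↔ 0 ≤ v ∧ IsCoprime v.1 v.2 := by
  rw [Int.isCoprime_iff_gcd_eq_one, Prod.le_def, Prod.fst_zero, Prod.snd_zero]
  refine ⟨fun ⟨h1, h2, hg, _⟩ => ⟨⟨h1, h2⟩, hg⟩,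
    fun ⟨⟨h1, h2⟩, hg⟩ => ⟨h1, h2, hg, fun h0 => ?_⟩⟩
  have := Int.isUnit_iff.1 (isCoprime_zero_right.1 (h0 ▸ Int.isCoprime_iff_gcd_eq_one.2 hg))
  omega

lemma exists_det_eq_one_mem_Icc {v : ℤ × ℤ} (h1 : 0 < v.1) (h2 : 0 < v.2)
    (hv : IsCoprime v.1 v.2) : ∃ u ∈ Icc 0 v, det u v = 1 := by
  obtain ⟨x, y, hxy⟩ := hv
  -- `u.1 ≡ y (mod v.1)` is taken in `(0, v.1]`, which forces `0 ≤ u.2 < v.2`.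
  have hr0 : 0 ≤ (y - 1) % v.1 := Int.emod_nonneg _ h1.ne'
  have hr1 : (y - 1) % v.1 < v.1 := Int.emod_lt_of_pos _ h1
  have hr := Int.emod_def (y - 1) v.1
  set r := (y - 1) % v.1
  set t := (y - 1) / v.1
  have hdet : (r + 1) * v.2 - (-(x + t * v.2)) * v.1 = 1 := by
    linear_combination hxy + v.2 * hr
  refine ⟨(r + 1, -(x + t * v.2)), ?_, hdet⟩
  simp only [mem_Icc, Prod.le_def, Prod.fst_zero, Prod.snd_zero]
  refine ⟨⟨by omega, by nlinarith⟩, by omega, by nlinarith⟩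

lemma le_or_le_of_det_eq_one {u w : ℤ × ℤ} (hu : 0 ≤ u) (hw : 0 ≤ w) (h : det u w = 1)
    (h2 : 2 < (u + w).1 + (u + w).2) : u ≤ w ∨ w ≤ u := by
  obtain ⟨u₁, u₂⟩ := u
  obtain ⟨w₁, w₂⟩ := w
  simp only [det, Prod.le_def, Prod.fst_zero, Prod.snd_zero, Prod.mk_add_mk] at *
  rcases le_total u₁ w₁ with h₁ | h₁ <;> rcases le_total u₂ w₂ with h₂ | h₂
  · exact Or.inl ⟨h₁, h₂⟩
  · nlinarith
  · rcases h₁.eq_or_lt with h₁ | h₁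
    · exact Or.inl ⟨h₁.ge, h₂⟩
    rcases h₂.eq_or_lt with h₂ | h₂
    · exact Or.inr ⟨h₁.le, h₂.ge⟩
    -- here `1 = det u w ≥ w₁ + u₂ + 1`, which leaves only `u = (1, 0)`, `w = (0, 1)`
    nlinarith
  · exact Or.inr ⟨h₁, h₂⟩

theorem exists_fareyPair_add_add {v : ℤ × ℤ} (h1 : 0 < v.1) (h2 : 0 < v.2)
    (hv : IsCoprime v.1 v.2) (h3 : 2 < v.1 + v.2) :
    ∃ α γ : ℤ × ℤ, 0 ≤ α ∧ 0 ≤ γ ∧ FareyPair α γ ∧ γ + α + α = v := by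
  obtain ⟨u, ⟨hu, huv⟩, hdet⟩ := exists_det_eq_one_mem_Icc h1 h2 hv
  have hw : 0 ≤ v - u := sub_nonneg.2 huv
  have huw : det u (v - u) = 1 := by rw [det_sub_right, det_self, hdet, sub_zero]
  rcases le_or_le_of_det_eq_one hu hw huw (by simpa using h3) with hle | hle
  · refine ⟨u, v - u - u, hu, sub_nonneg.2 hle, fareyPair_iff.2 (Or.inl ?_), by abel⟩
    rw [det_sub_right, det_self, huw, sub_zero]
  · refine ⟨v - u, u - (v - u), hw, sub_nonneg.2 hle, fareyPair_iff.2 (Or.inr ?_), by abel⟩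
    rw [det_sub_right, det_self, sub_zero, det_swap, huw]

lemma det_add_add (α γ : ℤ × ℤ) : det α (γ + α + α) = det α γ := by
  rw [det_add_right, det_add_right, det_self, add_zero, add_zero]

lemma det_add_add_add (α γ : ℤ × ℤ) : det (γ + α) (γ + α + α) = -det α γ := by
  simp only [det, Prod.fst_add, Prod.snd_add]; ring

theorem FareyPair.eq_of_add_add_eq {α γ α' γ' v : ℤ × ℤ} (hα : 0 ≤ α) (hγ : 0 ≤ γ)
    (hα' : 0 ≤ α') (hγ' : 0 ≤ γ') (h : FareyPair α γ) (h' : FareyPair α' γ')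
    (hv : γ + α + α = v) (hv' : γ' + α' + α' = v) : α = α' ∧ γ = γ' := by
  have hcop : IsCoprime v.1 v.2 := hv ▸ h.add_right.add_right.isCoprime_right
  have mem_left {α γ : ℤ × ℤ} (hα : 0 ≤ α) (hγ : 0 ≤ γ) (hv : γ + α + α = v) :
      α ∈ Icc 0 v :=
    hv ▸ ⟨hα, le_add_of_nonneg_left (add_nonneg hγ hα)⟩
  have mem_mediant {α γ : ℤ × ℤ} (hα : 0 ≤ α) (hγ : 0 ≤ γ) (hv : γ + α + α = v) :
      γ + α ∈ Icc 0 v :=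
    hv ▸ ⟨add_nonneg hγ hα, le_add_of_nonneg_right hα⟩
  have det_left {α γ : ℤ × ℤ} (hv : γ + α + α = v) : det α v = det α γ :=
    hv ▸ det_add_add α γ
  have det_mediant {α γ : ℤ × ℤ} (hv : γ + α + α = v) : det (γ + α) v = -det α γ :=
    hv ▸ det_add_add_add α γ
  rw [fareyPair_iff] at h h'
  have hne : det α v ≠ 0 := by rw [det_left hv]; omega
  rcases (by omega : det α γ = det α' γ' ∨ det α γ = -det α' γ') with hε | hε
  · obtain rfl : α = α' := eq_of_det_eq hcop (mem_left hα hγ hv) (mem_left hα' hγ' hv')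
      (by rw [det_left hv, det_left hv', hε]) hne
    exact ⟨rfl, add_right_cancel (add_right_cancel (hv.trans hv'.symm))⟩
  · -- opposite signs would swap `α` and `γ ⊕ α` between the two decompositions
    have h₁ : α = γ' + α' :=
      eq_of_det_eq hcop (mem_left hα hγ hv) (mem_mediant hα' hγ' hv')
      (by rw [det_left hv, det_mediant hv', hε]) hne
    have h₂ : γ + α = α' := eq_of_det_eq hcop (mem_mediant hα hγ hv) (mem_left hα' hγ' hv')
      (by rw [det_mediant hv, det_left hv', hε, neg_neg]) (by rw [det_mediant hv]; omega)
    have hγ0 : γ' + γ = 0 := add_eq_right.1 (by rw [add_assoc, h₂, ← h₁])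
    rw [((add_eq_zero_iff_of_nonneg hγ' hγ).1 hγ0).2, det, Prod.fst_zero, Prod.snd_zero] at h
    omega

namespace NNExtRat

def zero : NNExtRat := ⟨(0, 1), by unfold IsNNExtRat; decide⟩
def infty : NNExtRat := ⟨(1, 0), by unfold IsNNExtRat; decide⟩
def one : NNExtRat := ⟨(1, 1), by unfold IsNNExtRat; decide⟩

def height (v : NNExtRat) : ℕ := (v.val.1 + v.val.2).toNat

variable (v : NNExtRat)

lemma nonneg : 0 ≤ v.val := (isNNExtRat_iff.1 v.2).1

lemma isCoprime : IsCoprime v.val.1 v.val.2 := (isNNExtRat_iff.1 v.2).2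

lemma one_le_add : 1 ≤ v.val.1 + v.val.2 := by
  obtain ⟨h1, h2, hg, h0⟩ := v.2
  rcases h2.eq_or_lt with h2 | h2
  · have := h0 h2.symm; omega
  · omega

variable {v}

lemma pos_of_two_lt_height (hv : 2 < v.height) : 0 < v.val.1 ∧ 0 < v.val.2 := by
  obtain ⟨h1, h2, hg, h0⟩ := v.2
  refine ⟨h1.lt_of_ne fun h => ?_, h2.lt_of_ne fun h => ?_⟩
  · rw [← h, Int.gcd_zero_left] at hg
    simp only [height] at hv
    omega
  · have := h0 h.symm
    simp only [height] at hv
    omega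

lemma eq_of_height_le_two (hv : v.height ≤ 2) : v = zero ∨ v = infty ∨ v = one := by
  have hv1 := v.one_le_add
  obtain ⟨h1, h2, hg, h0⟩ := v.2
  simp only [height] at hv
  have : v.val = (0, 1) ∨ v.val = (1, 0) ∨ v.val = (1, 1) := by
    rcases (by omega : v.val.1 = 0 ∨ v.val.2 = 0 ∨ (v.val.1 = 1 ∧ v.val.2 = 1)) with h | h | h
    · rw [h, Int.gcd_zero_left] at hg
      exact Or.inl (Prod.ext h (by omega))
    · exact Or.inr (Or.inl (Prod.ext (h0 h) h))
    · exact Or.inr (Or.inr (Prod.ext h.1 h.2))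
  exact this.imp Subtype.ext (Or.imp Subtype.ext Subtype.ext)

def mediant (α γ : NNExtRat) (h : FareyPair α.val γ.val) : NNExtRat :=
  ⟨γ.val + α.val,
    isNNExtRat_iff.2 ⟨add_nonneg γ.nonneg α.nonneg, h.add_right.isCoprime_right⟩⟩

/-- `v = γ ⊕² α` for the Farey pair `α, γ`. -/
def IsFareyDecomp (α γ v : NNExtRat) : Prop :=
  FareyPair α.val γ.val ∧ γ.val + α.val + α.val = v.val

namespace IsFareyDecomp

variable {α γ : NNExtRat} (h : IsFareyDecomp α γ v)
include h

lemma height_lt : γ.height < v.height := by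
  have := α.one_le_add
  have := γ.one_le_add
  simp only [height, ← h.2, Prod.fst_add, Prod.snd_add]
  omega

lemma height_mediant_lt : (mediant α γ h.1).height < v.height := by
  have := α.one_le_add
  have := γ.one_le_add
  simp only [height, mediant, ← h.2, Prod.fst_add, Prod.snd_add]
  omega

lemma two_lt_height : 2 < v.height := by
  have := α.one_le_add
  have := γ.one_le_add
  simp only [height, ← h.2, Prod.fst_add, Prod.snd_add]
  omega

lemma unique {α' γ' : NNExtRat} (h' : IsFareyDecomp α' γ' v) : α = α' ∧ γ = γ' := by
  obtain ⟨hα, hγ⟩ :=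
    FareyPair.eq_of_add_add_eq α.nonneg γ.nonneg α'.nonneg γ'.nonneg h.1 h'.1 h.2 h'.2
  exact ⟨Subtype.ext hα, Subtype.ext hγ⟩

end IsFareyDecomp

lemma exists_isFareyDecomp (hv : 2 < v.height) : ∃ α γ, IsFareyDecomp α γ v := by
  obtain ⟨h1, h2⟩ := pos_of_two_lt_height hv
  obtain ⟨α, γ, hα, hγ, h, hαγ⟩ := exists_fareyPair_add_add h1 h2 v.isCoprime (by
    simp only [height] at hv; omega)
  exact ⟨⟨α, isNNExtRat_iff.2 ⟨hα, h.isCoprime_left⟩⟩,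
    ⟨γ, isNNExtRat_iff.2 ⟨hγ, h.isCoprime_right⟩⟩, h, hαγ⟩

variable {R : Type*} [Ring R]

def IsFareyRecursive (d₁ d₂ F : NNExtRat → R) : Prop :=
  ∀ α γ : NNExtRat, FareyPair α.val γ.val →
    ∀ m m2 : NNExtRat, m.val = γ.val + α.val → m2.val = γ.val + α.val + α.val →
      F m2 = -d₁ α * F γ + d₂ α * F m

open Classical in
/-- The Farey recursive function with prescribed values `base` on the points of height at most
`2`, the ones that admit no Farey decomposition. -/
noncomputable def fareyRec (d₁ d₂ base : NNExtRat → R) (v : NNExtRat) : R :=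
  if h : ∃ p : NNExtRat × NNExtRat, IsFareyDecomp p.1 p.2 v then
    -d₁ h.choose.1 * fareyRec d₁ d₂ base h.choose.2 +
      d₂ h.choose.1 * fareyRec d₁ d₂ base (mediant h.choose.1 h.choose.2 h.choose_spec.1)
  else base v
termination_by v.height
decreasing_by
  · exact h.choose_spec.height_lt
  · exact h.choose_spec.height_mediant_lt

variable {d₁ d₂ base : NNExtRat → R}

lemma fareyRec_of_height_le_two {v : NNExtRat} (hv : v.height ≤ 2) :
    fareyRec d₁ d₂ base v = base v := by
  rw [fareyRec, dif_neg]
  rintro ⟨p, hp⟩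
  exact hv.not_gt hp.two_lt_height

lemma fareyRec_of_isFareyDecomp {α γ v : NNExtRat} (h : IsFareyDecomp α γ v) :
    fareyRec d₁ d₂ base v =
      -d₁ α * fareyRec d₁ d₂ base γ +
        d₂ α * fareyRec d₁ d₂ base (mediant α γ h.1) := by
  have hex : ∃ p : NNExtRat × NNExtRat, IsFareyDecomp p.1 p.2 v := ⟨(α, γ), h⟩
  rw [fareyRec, dif_pos hex]
  obtain ⟨hα, hγ⟩ := hex.choose_spec.unique h
  simp only [hα, hγ]

lemma isFareyRecursive_fareyRec : IsFareyRecursive d₁ d₂ (fareyRec d₁ d₂ base) := by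
  intro α γ h m m2 hm hm2
  obtain rfl : m = mediant α γ h := Subtype.ext hm
  exact fareyRec_of_isFareyDecomp ⟨h, hm2.symm⟩

lemma IsFareyRecursive.ext {F G : NNExtRat → R} (hF : IsFareyRecursive d₁ d₂ F)
    (hG : IsFareyRecursive d₁ d₂ G) (hbase : ∀ v : NNExtRat, v.height ≤ 2 → F v = G v) :
    F = G := by
  funext v
  induction h : v.height using Nat.strong_induction_on generalizing v with
  | _ n ih =>
  rcases le_or_gt v.height 2 with hv | hv
  · exact hbase v hv
  obtain ⟨α, γ, hd⟩ := exists_isFareyDecomp hv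
  have hm : (mediant α γ hd.1).val = γ.val + α.val := rfl
  rw [hF α γ hd.1 _ v hm hd.2.symm, hG α γ hd.1 _ v hm hd.2.symm,
    ih _ (h ▸ hd.height_lt) γ rfl, ih _ (h ▸ hd.height_mediant_lt) _ rfl]

end NNExtRat

open NNExtRat

/-- Given a commutative ring `R`, arbitrary functions `d₁ d₂ : ℚ̂₊ → R`, and
`a b c ∈ R`, there is a unique `(d₁,d₂)`-Farey recursive function `F : ℚ̂₊ → R` with
`F(0/1) = a`, `F(1/0) = b`, `F(1/1) = c`; no invertibility of `d₁(1/0)` is needed. -/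
theorem exists_unique_FRF_nonneg (R : Type*) [CommRing R] (d₁ d₂ : NNExtRat → R)
    (a b c : R) :
    ∃! F : NNExtRat → R,
      F ⟨(0, 1), by unfold IsNNExtRat; decide⟩ = a ∧
      F ⟨(1, 0), by unfold IsNNExtRat; decide⟩ = b ∧
      F ⟨(1, 1), by unfold IsNNExtRat; decide⟩ = c ∧
      ∀ α γ : NNExtRat, FareyPair α.val γ.val →
        ∀ m m2 : NNExtRat, m.val = γ.val + α.val → m2.val = γ.val + α.val + α.val →
          F m2 = -d₁ α * F γ + d₂ α * F m := by
  let base : NNExtRat → R := fun v =>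
    if v.val = (0, 1) then a else if v.val = (1, 0) then b else c
  refine ⟨fareyRec d₁ d₂ base, ⟨?_, ?_, ?_, isFareyRecursive_fareyRec⟩, ?_⟩
  · exact (fareyRec_of_height_le_two (by decide)).trans (if_pos rfl)
  · exact (fareyRec_of_height_le_two (by decide)).trans <| (if_neg (by decide)).trans (if_pos rfl)
  · exact (fareyRec_of_height_le_two (by decide)).trans <|
      (if_neg (by decide)).trans (if_neg (by decide))
  · rintro F ⟨h0, h1, h11, hF⟩
    refine IsFareyRecursive.ext hF isFareyRecursive_fareyRec fun v hv => ?_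
    rw [fareyRec_of_height_le_two hv]
    rcases eq_of_height_le_two hv with rfl | rfl | rfl
    · exact h0
    · exact h1
    · exact h11
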